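/- arXiv:2101.07043 — 2 statements merged into one kernel-verified Lean document; each statement's English description precedes it below -/
import Mathlib

section
/- Under the anytime FTPL caching policy with learning rates η_t = α·sqrt(t) (α > 0), the probability that the currently requested file f_t is fetched into the cache at slot t+1 satisfies P(f_t ∉ S_t and f_t ∈ S_{t+1}) ≤ 3/(2·α·sqrt(2π)·sqrt(t+1)). -/
/-!
Write `k = f t` and let `A_η(w)` be the `C`-th largest of `X t j + η w j` over `j ≠ k`. If `k` is
not cached at slot `t`, the `C` cached files beat it, so `γ k ≤ (A_{η_t}(γ) - X t k) / η_t`. If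
`k` is cached at slot `t + 1`, one of the top `C` files `j ≠ k` at level `η_{t+1}` is not, so
`γ k ≥ (A_{η_{t+1}}(γ) - X t k - 1) / η_{t+1}`. Both thresholds are functions of `(γ j)_{j ≠ k}`,
which is independent of `γ k`, and the window between them has width at most `3 / (2 η_{t+1})`
because `η' A_η ≤ η A_{η'} + (η' - η)(t - 1)` and `(√(t + 1) - √t)(t - 1) ≤ √t / 2`. The standard
Gaussian density is at most `1 / √(2π)`.
-/

open MeasureTheory ProbabilityTheory Real

lemma sqrt_add_one_sub_sqrt_mul_le {t : ℝ} (ht : 0 ≤ t) :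
    (√(t + 1) - √t) * (t - 1) ≤ √t / 2 := by
  have hs := Real.sq_sqrt ht
  have hs' := Real.sq_sqrt (by linarith : 0 ≤ t + 1)
  have hle : √t ≤ √(t + 1) := Real.sqrt_le_sqrt (by linarith)
  have hpos : 0 < √(t + 1) := Real.sqrt_pos.2 (by linarith)
  nlinarith [Real.sqrt_nonneg t, mul_le_mul_of_nonneg_left hle (Real.sqrt_nonneg t)]

section NthLargest

variable {ι : Type*} {C : ℕ}

/-- For `0 < C ≤ card ι`, the `C`-th largest entry of `v`. -/
noncomputable def nthLargest (C : ℕ) (v : ι → ℝ) : ℝ :=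
  ⨆ T : {T : Finset ι // T.card = C}, ⨅ j : T.1, v j

variable [Fintype ι]

lemma le_nthLargest (hC : 0 < C) {v : ι → ℝ} {T : Finset ι} (hT : T.card = C) {b : ℝ}
    (hb : ∀ j ∈ T, b ≤ v j) : b ≤ nthLargest C v := by
  have : Nonempty T := (Finset.card_pos.1 (hT ▸ hC)).to_subtype
  exact le_ciSup_of_le (Set.finite_range _).bddAbove ⟨T, hT⟩ (le_ciInf fun j => hb j j.2)

lemma exists_card_eq_forall_nthLargest_le (hCι : C ≤ Fintype.card ι) (v : ι → ℝ) :
    ∃ T : Finset ι, T.card = C ∧ ∀ j ∈ T, nthLargest C v ≤ v j := by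
  obtain ⟨T, -, hT⟩ := Finset.exists_subset_card_eq (s := Finset.univ) (by simpa using hCι)
  have : Nonempty {T : Finset ι // T.card = C} := ⟨⟨T, hT⟩⟩
  obtain ⟨T', hT'⟩ := exists_eq_ciSup_of_finite (f := fun T : {T : Finset ι // T.card = C} =>
    ⨅ j : T.1, v j)
  refine ⟨T'.1, T'.2, fun j hj => ?_⟩
  rw [nthLargest, ← hT']
  exact ciInf_le (Set.finite_range _).bddBelow (⟨j, hj⟩ : T'.1)

lemma measurable_nthLargest : Measurable (nthLargest C : (ι → ℝ) → ℝ) :=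
  Measurable.iSup fun _ => Measurable.iInf fun j => measurable_pi_apply j.1

lemma mul_nthLargest_le (hC : 0 < C) (hCι : C ≤ Fintype.card ι) {Y w : ι → ℝ} {M η η' : ℝ}
    (hY : ∀ j, Y j ≤ M) (hη : 0 < η) (hηη' : η ≤ η') :
    η' * nthLargest C (fun j => Y j + η * w j)
      ≤ η * nthLargest C (fun j => Y j + η' * w j) + (η' - η) * M := by
  obtain ⟨T, hT, hA⟩ := exists_card_eq_forall_nthLargest_le hCι (fun j => Y j + η * w j)
  set A := nthLargest C (fun j => Y j + η * w j)
  suffices (η' * A - (η' - η) * M) / η ≤ nthLargest C (fun j => Y j + η' * w j) by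
    rw [div_le_iff₀ hη] at this
    linarith
  refine le_nthLargest hC hT fun j hj => ?_
  rw [div_le_iff₀ hη]
  nlinarith [hA j hj, hY j]

end NthLargest

section EntryThreshold

variable {ι : Type*} [DecidableEq ι] {C : ℕ}

/-- The value of `g k` above which `Z k + η g k` exceeds the `C`-th largest of the perturbed
entries `Z j + η g j`, `j ≠ k`. -/
noncomputable def entryThreshold (C : ℕ) (k : ι) (Z : ι → ℝ) (η : ℝ) (g : {j // j ≠ k} → ℝ) :
    ℝ :=
  (nthLargest C (fun j : {j // j ≠ k} => Z j + η * g j) - Z k) / η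

lemma entryThreshold_add_single (k : ι) (Z : ι → ℝ) (c η : ℝ) (g : {j // j ≠ k} → ℝ) :
    entryThreshold C k (Z + Pi.single k c) η g = entryThreshold C k Z η g - c / η := by
  have hZ : (fun j : {j // j ≠ k} => (Z + Pi.single k c : ι → ℝ) j + η * g j)
      = fun j : {j // j ≠ k} => Z j + η * g j := by
    ext j; simp [Pi.single_eq_of_ne j.2]
  rw [entryThreshold, entryThreshold, hZ]
  simp only [Pi.add_apply, Pi.single_eq_same]
  ring

variable [Fintype ι]

lemma measurable_entryThreshold (k : ι) (Z : ι → ℝ) (η : ℝ) :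
    Measurable (entryThreshold C k Z η) :=
  ((measurable_nthLargest.comp (by fun_prop)).sub_const _).div_const _

lemma le_entryThreshold_of_notMem (hC : 0 < C) {k : ι} {S : Finset ι} (hS : S.card = C)
    (hk : k ∉ S) {Z g : ι → ℝ} {η : ℝ} (hη : 0 < η)
    (htop : ∀ i ∈ S, Z k + η * g k ≤ Z i + η * g i) :
    g k ≤ entryThreshold C k Z η (fun j => g j) := by
  have hS' : (S.subtype (· ≠ k)).card = C := by
    rw [Finset.card_subtype, Finset.filter_ne', Finset.erase_eq_of_notMem hk, hS]
  rw [entryThreshold, le_div_iff₀ hη]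
  have := le_nthLargest hC hS' (v := fun j : {j // j ≠ k} => Z j + η * g j)
    fun j hj => htop j (Finset.mem_subtype.1 hj)
  linarith

lemma entryThreshold_le_of_mem (hC : 0 < C) {k : ι} (hCι : C ≤ Fintype.card {j // j ≠ k})
    {S : Finset ι} (hS : S.card = C) (hk : k ∈ S) {Z g : ι → ℝ} {η : ℝ} (hη : 0 < η)
    (htop : ∀ i ∈ S, ∀ j ∉ S, Z j + η * g j ≤ Z i + η * g i) :
    entryThreshold C k Z η (fun j => g j) ≤ g k := by
  obtain ⟨T, hT, hA⟩ :=
    exists_card_eq_forall_nthLargest_le hCι (fun j : {j // j ≠ k} => Z j + η * g j)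
  -- `T` has `C` elements other than `k`, while `S` has only `C - 1` of them.
  obtain ⟨_, hjT, hjS⟩ := Finset.exists_mem_notMem_of_card_lt_card
    (s := S.erase k) (t := T.map (Function.Embedding.subtype _))
    (by rw [Finset.card_map, hT, Finset.card_erase_of_mem hk, hS]; omega)
  obtain ⟨j, hj, rfl⟩ := Finset.mem_map.1 hjT
  have hjS' : j.1 ∉ S := fun h => hjS (Finset.mem_erase.2 ⟨j.2, h⟩)
  rw [entryThreshold, div_le_iff₀ hη]
  linarith [hA j hj, htop k hk j hjS']

lemma entryThreshold_sub_entryThreshold_add_single_le (hC : 0 < C) {k : ι}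
    (hCι : C ≤ Fintype.card {j // j ≠ k}) {Z : ι → ℝ} (g : {j // j ≠ k} → ℝ) {t α : ℝ}
    (ht : 1 ≤ t) (hα : 0 < α) (hZk : 0 ≤ Z k) (hZ : ∀ j, Z j ≤ t - 1) :
    entryThreshold C k Z (α * √t) g - entryThreshold C k (Z + Pi.single k 1) (α * √(t + 1)) g
      ≤ 3 / (2 * α * √(t + 1)) := by
  set η := α * √t
  set η' := α * √(t + 1)
  have hη : 0 < η := mul_pos hα (Real.sqrt_pos.2 (by linarith))
  have hηη' : η ≤ η' := mul_le_mul_of_nonneg_left (Real.sqrt_le_sqrt (by linarith)) hα.le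
  have hη' : 0 < η' := hη.trans_le hηη'
  set A := nthLargest C (fun j : {j // j ≠ k} => Z j + η * g j)
  set A' := nthLargest C (fun j : {j // j ≠ k} => Z j + η' * g j)
  have hA : η' * A ≤ η * A' + (η' - η) * (t - 1) :=
    mul_nthLargest_le hC hCι (fun j => hZ j) hη hηη'
  have hgap : (η' - η) * (t - 1) ≤ η / 2 := by
    have := mul_le_mul_of_nonneg_left (sqrt_add_one_sub_sqrt_mul_le (by linarith : 0 ≤ t)) hα.le
    simp only [η, η']
    linarith
  rw [entryThreshold_add_single, entryThreshold, entryThreshold]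
  calc (A - Z k) / η - ((A' - Z k) / η' - 1 / η')
      = (η' * A - η * A' - (η' - η) * Z k + η) / (η * η') := by field_simp; ring
    _ ≤ (3 / 2 * η) / (η * η') := by
        gcongr
        nlinarith [mul_nonneg (sub_nonneg.2 hηη') hZk]
    _ = 3 / (2 * η') := by field_simp
    _ = 3 / (2 * α * √(t + 1)) := by rw [mul_assoc]

end EntryThreshold

lemma gaussianPDFReal_le_inv_sqrt (m : ℝ) (v : NNReal) (x : ℝ) :
    gaussianPDFReal m v x ≤ (√(2 * π * v))⁻¹ := by
  rw [gaussianPDFReal]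
  refine mul_le_of_le_one_right (by positivity) (Real.exp_le_one_iff.2 ?_)
  exact div_nonpos_of_nonpos_of_nonneg (neg_nonpos.2 (sq_nonneg _)) (by positivity)

lemma gaussianReal_Icc_le (m : ℝ) {v : NNReal} (hv : v ≠ 0) {a b L : ℝ} (hab : b - a ≤ L) :
    gaussianReal m v (Set.Icc a b) ≤ ENNReal.ofReal (L / √(2 * π * v)) := by
  calc gaussianReal m v (Set.Icc a b)
      ≤ ∫⁻ _ in Set.Icc a b, ENNReal.ofReal (√(2 * π * v))⁻¹ := by
        rw [gaussianReal_apply m hv]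
        exact lintegral_mono fun x => ENNReal.ofReal_le_ofReal (gaussianPDFReal_le_inv_sqrt m v x)
    _ = ENNReal.ofReal ((b - a) / √(2 * π * v)) := by
        rw [setLIntegral_const, Real.volume_Icc, ← ENNReal.ofReal_mul (by positivity),
          div_eq_mul_inv, mul_comm]
    _ ≤ ENNReal.ofReal (L / √(2 * π * v)) := by gcongr

lemma measure_le_and_le_of_indepFun {Ω E : Type*} [MeasurableSpace Ω] [MeasurableSpace E]
    {μ : Measure Ω} [IsProbabilityMeasure μ] {W : Ω → E} {Z : Ω → ℝ} {ν : Measure ℝ}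
    (hW : AEMeasurable W μ) (hZ : HasLaw Z ν μ) (hWZ : IndepFun W Z μ) {l u : E → ℝ}
    (hl : Measurable l) (hu : Measurable u) {L : ℝ} {B : ENNReal}
    (hlu : ∀ w, u w - l w ≤ L) (hν : ∀ a b, b - a ≤ L → ν (Set.Icc a b) ≤ B) :
    μ {ω | l (W ω) ≤ Z ω ∧ Z ω ≤ u (W ω)} ≤ B := by
  set T : Set (E × ℝ) := {p | l p.1 ≤ p.2} ∩ {p | p.2 ≤ u p.1}
  have hT : MeasurableSet T :=
    (measurableSet_le (hl.comp measurable_fst) measurable_snd).inter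
      (measurableSet_le measurable_snd (hu.comp measurable_fst))
  have : IsProbabilityMeasure (μ.map W) := Measure.isProbabilityMeasure_map hW
  have : IsProbabilityMeasure ν := hZ.isProbabilityMeasure_iff.1 ‹_›
  calc μ {ω | l (W ω) ≤ Z ω ∧ Z ω ≤ u (W ω)}
      = μ.map (fun ω => (W ω, Z ω)) T :=
        (Measure.map_apply_of_aemeasurable (hW.prodMk hZ.aemeasurable) hT).symm
    _ = ((μ.map W).prod ν) T := by
        rw [(indepFun_iff_map_prod_eq_prod_map_map hW hZ.aemeasurable).1 hWZ, hZ.map_eq]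
    _ = ∫⁻ w, ν (Set.Icc (l w) (u w)) ∂(μ.map W) := Measure.prod_apply hT
    _ ≤ ∫⁻ _, B ∂(μ.map W) := lintegral_mono fun w => hν _ _ (hlu w)
    _ = B := by simp

lemma ProbabilityTheory.iIndepFun.indepFun_subtype_ne {Ω ι β : Type*} [MeasurableSpace Ω]
    [MeasurableSpace β] [Fintype ι] [DecidableEq ι] {μ : Measure Ω} {f : ι → Ω → β}
    (h : iIndepFun f μ) (hf : ∀ i, AEMeasurable (f i) μ) (k : ι) :
    IndepFun (fun ω (j : {j // j ≠ k}) => f j ω) (f k) μ := by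
  have hpair := h.indepFun_finset₀ (Finset.univ.erase k) {k}
    (Finset.disjoint_singleton_right.2 (Finset.notMem_erase k _)) hf
  exact hpair.comp
    (φ := fun (v : Finset.univ.erase k → β) (j : {j // j ≠ k}) =>
      v ⟨j.1, Finset.mem_erase.2 ⟨j.2, Finset.mem_univ _⟩⟩)
    (ψ := fun (v : ({k} : Finset ι) → β) => v ⟨k, Finset.mem_singleton_self k⟩)
    (by fun_prop) (by fun_prop)

section RequestCounts

variable {ι : Type*} [DecidableEq ι] {f : ℕ → ι} {X : ℕ → ι → ℝ}

lemma requestCount_nonneg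
    (hX : ∀ t i, X t i = ∑ τ ∈ Finset.Ico 1 t, if f τ = i then (1 : ℝ) else 0) (t : ℕ) (i : ι) :
    0 ≤ X t i := by
  rw [hX]
  positivity

lemma requestCount_le
    (hX : ∀ t i, X t i = ∑ τ ∈ Finset.Ico 1 t, if f τ = i then (1 : ℝ) else 0) {t : ℕ}
    (ht : 1 ≤ t) (i : ι) : X t i ≤ t - 1 := by
  calc X t i ≤ ∑ τ ∈ Finset.Ico 1 t, (1 : ℝ) := by
        rw [hX]
        exact Finset.sum_le_sum fun τ _ => by split_ifs <;> norm_num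
    _ = t - 1 := by simp [Nat.cast_sub ht]

lemma requestCount_succ
    (hX : ∀ t i, X t i = ∑ τ ∈ Finset.Ico 1 t, if f τ = i then (1 : ℝ) else 0) {t : ℕ}
    (ht : 1 ≤ t) : X (t + 1) = X t + Pi.single (f t) 1 := by
  ext i
  rw [Pi.add_apply, hX, hX, Finset.sum_Ico_succ_top ht, Pi.single_apply]
  simp only [eq_comm]

end RequestCounts

/-- Under the anytime FTPL caching policy with learning rates
`η_t = α·sqrt t` (`α > 0`), the probability that the currently requested file `f_t`
is fetched into the cache at slot `t+1` satisfies
`P(f_t ∉ S_t and f_t ∈ S_{t+1}) ≤ 3/(2·α·sqrt(2π)·sqrt(t+1))`. -/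
theorem ftpl_anytime_requested_file_fetch_probability
    {Ω : Type*} [MeasureSpace Ω] [IsProbabilityMeasure (ℙ : Measure Ω)]
    (N C : ℕ) (hC : 0 < C) (hCN : C < N)
    (f : ℕ → Fin N)
    (X : ℕ → Fin N → ℝ)
    (hX : ∀ t i, X t i = ∑ τ ∈ Finset.Ico 1 t, if f τ = i then (1 : ℝ) else 0)
    (γ : Fin N → Ω → ℝ)
    (hγindep : iIndepFun γ ℙ)
    (hγgauss : ∀ i, Measure.map (γ i) ℙ = gaussianReal 0 1)
    (α : ℝ) (hα : 0 < α)
    (S : ℕ → Ω → Finset (Fin N))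
    (hScard : ∀ t ω, (S t ω).card = C)
    (hStop : ∀ t ω, ∀ i ∈ S t ω, ∀ j ∉ S t ω,
      X t j + α * Real.sqrt t * γ j ω ≤ X t i + α * Real.sqrt t * γ i ω)
    (t : ℕ) (ht : 1 ≤ t) :
    ℙ {ω | f t ∉ S t ω ∧ f t ∈ S (t + 1) ω}
      ≤ ENNReal.ofReal (3 / (2 * α * Real.sqrt (2 * Real.pi) * Real.sqrt (t + 1))) := by
  set k := f t
  have hγ : ∀ i, AEMeasurable (γ i) ℙ := fun i =>
    .of_map_ne_zero (hγgauss i ▸ IsProbabilityMeasure.ne_zero _)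
  have hCι : C ≤ Fintype.card {j // j ≠ k} := by
    rw [Fintype.card_subtype_compl, Fintype.card_fin, Fintype.card_unique]; omega
  have ht' : (1 : ℝ) ≤ t := by exact_mod_cast ht
  have hη : ∀ s : ℝ, 1 ≤ s → 0 < α * √s := fun s hs => mul_pos hα (Real.sqrt_pos.2 (by linarith))
  have hwindow : {ω | k ∉ S t ω ∧ k ∈ S (t + 1) ω} ⊆
      {ω | entryThreshold C k (X t + Pi.single k 1) (α * √(t + 1)) (fun j => γ j ω) ≤ γ k ω ∧
        γ k ω ≤ entryThreshold C k (X t) (α * √t) (fun j => γ j ω)} := by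
    rintro ω ⟨hout, hin⟩
    have htop := hStop (t + 1) ω
    push_cast at htop
    rw [← requestCount_succ hX ht]
    exact ⟨entryThreshold_le_of_mem (g := fun i => γ i ω) hC hCι (hScard _ ω) hin
        (hη (t + 1) (by linarith)) htop,
      le_entryThreshold_of_notMem (Z := X t) (g := fun i => γ i ω) hC (hScard t ω) hout
        (hη t ht') fun i hi => hStop t ω i hi k hout⟩
  calc ℙ {ω | k ∉ S t ω ∧ k ∈ S (t + 1) ω}
      ≤ _ := measure_mono hwindow
    _ ≤ ENNReal.ofReal (3 / (2 * α * √(t + 1)) / √(2 * π * (1 : NNReal))) :=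
        measure_le_and_le_of_indepFun (W := fun ω (j : {j // j ≠ k}) => γ j ω)
          (aemeasurable_pi_lambda _ fun j => hγ j) ⟨hγ k, hγgauss k⟩
          (hγindep.indepFun_subtype_ne hγ k)
          (measurable_entryThreshold _ _ _) (measurable_entryThreshold _ _ _)
          (fun w => entryThreshold_sub_entryThreshold_add_single_le hC hCι w ht' hα
            (requestCount_nonneg hX t k) (requestCount_le hX ht))
          fun _ _ => gaussianReal_Icc_le 0 one_ne_zero
    _ = ENNReal.ofReal (3 / (2 * α * √(2 * π) * √(t + 1))) := by
        rw [NNReal.coe_one, mul_one, div_div, mul_right_comm]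
end

section
/- Let Y be a finite nonempty subset of ℝ^N, let 0 < η ≤ η′, and for x ∈ ℝ^N define Φ_η(x) = E_γ[max_{y∈Y} ⟨y, x + η·γ⟩] where γ is an N-dimensional standard Gaussian vector. Then for every x, Φ_{η′}(x) − Φ_η(x) ≤ (η′ − η)·E_γ[max_{y∈Y} ⟨y, γ⟩]. -/
open MeasureTheory ProbabilityTheory Real
open scoped RealInnerProductSpace

/-!
Pointwise in `γ`, the inner product with `x + η' • γ` splits as the one with `x + η • γ` plus
`(η' - η)` times the one with `γ`, and a maximum of sums is at most the sum of the maxima.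
Integrating this bound gives the claim; integrability comes from the Gaussian coordinates.
-/

lemma Finset.sup'_inner_add_smul_le {E ι : Type*} [NormedAddCommGroup E] [InnerProductSpace ℝ E]
    (s : Finset ι) (hs : s.Nonempty) (u : ι → E) (x g : E) {a b : ℝ} (hab : a ≤ b) :
    s.sup' hs (fun i => ⟪u i, x + b • g⟫)
      ≤ s.sup' hs (fun i => ⟪u i, x + a • g⟫) + (b - a) * s.sup' hs (fun i => ⟪u i, g⟫) := by
  refine Finset.sup'_le _ _ fun i hi => ?_
  have hsplit : ⟪u i, x + b • g⟫ = ⟪u i, x + a • g⟫ + (b - a) * ⟪u i, g⟫ := by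
    simp only [inner_add_right, real_inner_smul_right]; ring
  rw [hsplit]
  gcongr
  · exact Finset.le_sup' (fun j => ⟪u j, x + a • g⟫) hi
  · exact Finset.le_sup' (fun j => ⟪u j, g⟫) hi

lemma MeasureTheory.Integrable.finset_sup' {Ω ι : Type*} [MeasurableSpace Ω] {μ : Measure Ω}
    {s : Finset ι} (hs : s.Nonempty) {f : ι → Ω → ℝ} (hf : ∀ i ∈ s, Integrable (f i) μ) :
    Integrable (fun ω => s.sup' hs (fun i => f i ω)) μ := by
  simp only [← Finset.sup'_apply]
  exact Finset.sup'_induction hs f (p := fun g => Integrable g μ) (fun _ hg _ hh => hg.sup hh) hf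

lemma integrable_of_map_eq_gaussianReal {Ω : Type*} [MeasurableSpace Ω] {μ : Measure Ω}
    {X : Ω → ℝ} {m : ℝ} {v : NNReal} (hX : μ.map X = gaussianReal m v) : Integrable X μ := by
  -- `Measure.map` sends a function that is not a.e.-measurable to `0`.
  have hXmeas : AEMeasurable X μ :=
    .of_map_ne_zero (by rw [hX]; exact IsProbabilityMeasure.ne_zero _)
  have hid : Integrable id (μ.map X) := hX ▸ (memLp_id_gaussianReal 1).integrable le_rfl
  exact (integrable_map_measure aestronglyMeasurable_id hXmeas).mp hid

theorem smoothed_potential_rate_monotonicity_general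
    {Ω : Type*} [MeasureSpace Ω] [IsProbabilityMeasure (ℙ : Measure Ω)]
    (N : ℕ)
    (γ : Ω → EuclideanSpace ℝ (Fin N))
    (hγgauss : ∀ i, Measure.map (fun ω => γ ω i) ℙ = gaussianReal 0 1)
    (Y : Finset (EuclideanSpace ℝ (Fin N))) (hY : Y.Nonempty)
    (η η' : ℝ) (hηη' : η ≤ η')
    (x : EuclideanSpace ℝ (Fin N)) :
    (∫ ω, Y.sup' hY (fun y => ⟪y, x + η' • γ ω⟫))
        - (∫ ω, Y.sup' hY (fun y => ⟪y, x + η • γ ω⟫))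
      ≤ (η' - η) * ∫ ω, Y.sup' hY (fun y => ⟪y, γ ω⟫) := by
  have hγ : Integrable γ ℙ :=
    Integrable.of_eval_piLp fun i => integrable_of_map_eq_gaussianReal (hγgauss i)
  have hΦ (t : ℝ) : Integrable (fun ω => Y.sup' hY fun y => ⟪y, x + t • γ ω⟫) ℙ :=
    Integrable.finset_sup' hY fun y _ => ((integrable_const x).add (hγ.smul t)).const_inner y
  have hW : Integrable (fun ω => Y.sup' hY fun y => ⟪y, γ ω⟫) ℙ :=
    Integrable.finset_sup' hY fun y _ => hγ.const_inner y
  rw [sub_le_iff_le_add', ← integral_const_mul, ← integral_add (hΦ η) (hW.const_mul _)]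
  exact integral_mono (hΦ η') ((hΦ η).add (hW.const_mul _))
    fun ω => Y.sup'_inner_add_smul_le hY id x (γ ω) hηη'

/-- Let `Y` be a finite nonempty subset of `ℝ^N`, `0 < η ≤ η′`, and
`Φ_η(x) = E_γ[max_{y∈Y} ⟨y, x + η·γ⟩]` for `γ` an `N`-dimensional standard Gaussian
vector. Then for every `x`, `Φ_{η′}(x) − Φ_η(x) ≤ (η′ − η)·E_γ[max_{y∈Y} ⟨y, γ⟩]`. -/
theorem smoothed_potential_rate_monotonicity
    {Ω : Type*} [MeasureSpace Ω] [IsProbabilityMeasure (ℙ : Measure Ω)]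
    (N : ℕ)
    (γ : Ω → EuclideanSpace ℝ (Fin N))
    (hγmeas : Measurable γ)
    (hγindep : iIndepFun (fun i ω => γ ω i) ℙ)
    (hγgauss : ∀ i, Measure.map (fun ω => γ ω i) ℙ = gaussianReal 0 1)
    (Y : Finset (EuclideanSpace ℝ (Fin N))) (hY : Y.Nonempty)
    (η η' : ℝ) (hη : 0 < η) (hηη' : η ≤ η')
    (x : EuclideanSpace ℝ (Fin N)) :
    (∫ ω, Y.sup' hY (fun y => ⟪y, x + η' • γ ω⟫))
        - (∫ ω, Y.sup' hY (fun y => ⟪y, x + η • γ ω⟫))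
      ≤ (η' - η) * ∫ ω, Y.sup' hY (fun y => ⟪y, γ ω⟫) :=
  smoothed_potential_rate_monotonicity_general N γ hγgauss Y hY η η' hηη' x
end
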